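/- Let g₀ = [[0, I₂], [I₂, 0]] and ρ = [[0, A], [A, 0]] be 4×4 real matrices with A = [[0, −1], [1, 0]], and define the 8×8 matrices 𝔾 = [[0, g₀], [g₀, 0]], 𝕁 = [[ρ, 0], [0, ρ]], and η = [[0, I₄], [I₄, 0]]. Then: (i) g₀·ρ = ρ·g₀; (ii) 𝔾·𝕁 = 𝕁·𝔾; (iii) 𝔾² = I₈ and 𝔾ᵀ·η·𝔾 = η, so 𝔾 is a generalized (pseudo-)metric; (iv) 𝕁² = −I₈ and 𝕁ᵀ·η·𝕁 = η, so 𝕁 is a generalized almost complex structure. Hence the pair (𝔾, 𝕁) is a generalized Kähler structure associated with the Monge–Ampère equation det Hess f = ΔP/2 in the elliptic case ΔP = 2. -/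
import Mathlib


open Matrix

/-- The 2×2 block `A = [[0,−1],[1,0]]`. -/
def A2 : Matrix (Fin 2) (Fin 2) ℝ := !![0, -1; 1, 0]

/-- The Lychagin–Rubtsov pseudo-metric `g₀ = [[0,I₂],[I₂,0]]` for `det Hess f = 1`. -/
def g0 : Matrix (Fin 2 ⊕ Fin 2) (Fin 2 ⊕ Fin 2) ℝ := Matrix.fromBlocks 0 1 1 0

/-- The almost complex structure `ρ = [[0,A],[A,0]]` (elliptic case `ΔP = 2`). -/
def ρm : Matrix (Fin 2 ⊕ Fin 2) (Fin 2 ⊕ Fin 2) ℝ := Matrix.fromBlocks 0 A2 A2 0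

/-- The matrix `η = [[0,I₄],[I₄,0]]` of the natural inner product on `𝕋M`. -/
def ηm : Matrix ((Fin 2 ⊕ Fin 2) ⊕ (Fin 2 ⊕ Fin 2)) ((Fin 2 ⊕ Fin 2) ⊕ (Fin 2 ⊕ Fin 2)) ℝ :=
  Matrix.fromBlocks 0 1 1 0

lemma hA2 : A2 * A2 = -1 := by
  ext i j
  fin_cases i <;> fin_cases j <;>
    simp [A2, Matrix.mul_apply, Fin.sum_univ_succ]

lemma hA2T : A2ᵀ = -A2 := by
  ext i j
  fin_cases i <;> fin_cases j <;> simp [A2]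

lemma hg0sq : g0 * g0 = 1 := by
  simp [g0, Matrix.fromBlocks_multiply, ← Matrix.fromBlocks_one]

lemma hg0T : g0ᵀ = g0 := by
  simp [g0, Matrix.fromBlocks_transpose]

lemma hcomm : g0 * ρm = ρm * g0 := by
  simp [g0, ρm, Matrix.fromBlocks_multiply]

lemma hρsq : ρm * ρm = -1 := by
  have : (-1 : Matrix (Fin 2 ⊕ Fin 2) (Fin 2 ⊕ Fin 2) ℝ) =
      Matrix.fromBlocks (-1) 0 0 (-1) := by
    simp [← Matrix.fromBlocks_one, Matrix.fromBlocks_neg]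
  simp [ρm, Matrix.fromBlocks_multiply, hA2, this]

lemma hρT : ρmᵀ = -ρm := by
  rw [ρm, Matrix.fromBlocks_transpose, hA2T, Matrix.transpose_zero, Matrix.fromBlocks_neg]
  simp

lemma hρTg0ρ : ρmᵀ * g0 * ρm = g0 := by
  rw [hρT, Matrix.neg_mul, ← hcomm, Matrix.neg_mul, Matrix.mul_assoc, hρsq]
  simp

/-- In the elliptic case `ΔP = 2`, the pair `(𝔾, 𝕁)` with `𝔾 = [[0,g₀],[g₀,0]]` and
`𝕁 = [[ρ,0],[0,ρ]]` is a generalized Kähler structure: `g₀` commutes with `ρ`, `𝔾`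
commutes with `𝕁`, `𝔾` is a generalized (pseudo-)metric, and `𝕁` is a generalized
almost complex structure. -/
theorem generalized_Kahler
    (𝔾 𝕁 : Matrix ((Fin 2 ⊕ Fin 2) ⊕ (Fin 2 ⊕ Fin 2)) ((Fin 2 ⊕ Fin 2) ⊕ (Fin 2 ⊕ Fin 2)) ℝ)
    (h𝔾 : 𝔾 = Matrix.fromBlocks 0 g0 g0 0)
    (h𝕁 : 𝕁 = Matrix.fromBlocks ρm 0 0 ρm) :
    g0 * ρm = ρm * g0 ∧
    𝔾 * 𝕁 = 𝕁 * 𝔾 ∧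
    (𝔾 * 𝔾 = 1 ∧ 𝔾ᵀ * ηm * 𝔾 = ηm) ∧
    (𝕁 * 𝕁 = -1 ∧ 𝕁ᵀ * ηm * 𝕁 = ηm) := by
  subst h𝔾 h𝕁
  refine ⟨hcomm, ?_, ⟨?_, ?_⟩, ?_, ?_⟩
  · simp [Matrix.fromBlocks_multiply, hcomm]
  · simp [Matrix.fromBlocks_multiply, hg0sq, ← Matrix.fromBlocks_one]
  · simp [ηm, Matrix.fromBlocks_transpose, Matrix.fromBlocks_multiply, hg0T, hg0sq]
  · have : (-1 : Matrix ((Fin 2 ⊕ Fin 2) ⊕ (Fin 2 ⊕ Fin 2)) ((Fin 2 ⊕ Fin 2) ⊕ (Fin 2 ⊕ Fin 2)) ℝ) =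
        Matrix.fromBlocks (-1) 0 0 (-1) := by
      simp [← Matrix.fromBlocks_one, Matrix.fromBlocks_neg]
    simp [Matrix.fromBlocks_multiply, hρsq, this]
  · simp [ηm, Matrix.fromBlocks_transpose, Matrix.fromBlocks_multiply, hρT, hcomm,
      Matrix.mul_assoc, hρsq]
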